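/- arXiv:1408.6723 — 3 statements merged into one kernel-verified Lean document; each statement's English description precedes it below -/
import Mathlib

section
/- For a symmetric positive definite matrix Q and a symmetric positive semidefinite matrix Σ of the same size, tr(QΣ) ≥ (tr(Q⁻¹))⁻¹ · tr(Σ). -/
/-!
Every eigenvalue `x` of `Q` is positive and `x⁻¹` is an eigenvalue of the positive definite
matrix `Q⁻¹`, hence `x⁻¹ ≤ tr Q⁻¹`. So `(tr Q⁻¹)⁻¹ • 1 ≤ Q` in the Loewner order, and the claim
follows because the trace of a product of two positive semidefinite matrices is nonnegative.
-/

open Matrix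

open scoped MatrixOrder ComplexOrder

namespace Matrix

variable {ι 𝕜 : Type*} [Fintype ι] [RCLike 𝕜]

theorem PosSemidef.trace_mul_nonneg {A B : Matrix ι ι 𝕜} (hA : A.PosSemidef) (hB : B.PosSemidef) :
    0 ≤ (A * B).trace := by
  classical
  obtain ⟨C, rfl⟩ := CStarAlgebra.nonneg_iff_eq_star_mul_self.mp hA.nonneg
  rw [Matrix.mul_assoc, trace_mul_comm, star_eq_conjTranspose, Matrix.mul_assoc,
    ← Matrix.mul_assoc]
  exact (hB.mul_mul_conjTranspose_same C).trace_nonneg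

theorem smul_trace_le_trace_mul_of_smul_one_le [DecidableEq ι] {A B : Matrix ι ι 𝕜} {c : 𝕜}
    (hA : c • 1 ≤ A) (hB : B.PosSemidef) : c * B.trace ≤ (A * B).trace := by
  have := (le_iff.mp hA).trace_mul_nonneg hB
  rwa [Matrix.sub_mul, trace_sub, smul_mul, Matrix.one_mul, trace_smul, smul_eq_mul,
    sub_nonneg] at this

theorem PosSemidef.le_trace_of_mem_spectrum [DecidableEq ι] {A : Matrix ι ι 𝕜}
    (hA : A.PosSemidef) {x : ℝ} (hx : x ∈ spectrum ℝ A) : (x : 𝕜) ≤ A.trace := by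
  obtain ⟨i, rfl⟩ := hA.isHermitian.spectrum_real_eq_range_eigenvalues ▸ hx
  rw [hA.isHermitian.trace_eq_sum_eigenvalues]
  exact Finset.single_le_sum (fun j _ => RCLike.ofReal_nonneg.mpr (hA.eigenvalues_nonneg j))
    (Finset.mem_univ i)

theorem PosDef.inv_trace_inv_le_of_mem_spectrum [DecidableEq ι] {A : Matrix ι ι ℝ}
    (hA : A.PosDef) {x : ℝ} (hx : x ∈ spectrum ℝ A) : (A⁻¹.trace)⁻¹ ≤ x := by
  have hx_pos : 0 < x := by
    obtain ⟨i, rfl⟩ := hA.isHermitian.spectrum_real_eq_range_eigenvalues ▸ hx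
    exact hA.eigenvalues_pos i
  have hx_inv : x⁻¹ ∈ spectrum ℝ A⁻¹ := by
    lift A to (Matrix ι ι ℝ)ˣ using hA.isUnit
    exact coe_units_inv A ▸ spectrum.inv₀_mem_inv hx
  exact inv_le_of_inv_le₀ hx_pos (hA.inv.posSemidef.le_trace_of_mem_spectrum hx_inv)

theorem PosDef.inv_trace_inv_smul_one_le [DecidableEq ι] {A : Matrix ι ι ℝ} (hA : A.PosDef) :
    (A⁻¹.trace)⁻¹ • 1 ≤ A := by
  rw [← Algebra.algebraMap_eq_smul_one]
  exact (algebraMap_le_iff_le_spectrum hA.isHermitian.isSelfAdjoint).mpr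
    fun _ hx => hA.inv_trace_inv_le_of_mem_spectrum hx

end Matrix

theorem stmt_7 {n : ℕ}
    (Q Sg : Matrix (Fin n) (Fin n) ℝ)
    (hQ : Q.PosDef) (hSg : Sg.PosSemidef) :
    ((Q⁻¹).trace)⁻¹ * Sg.trace ≤ (Q * Sg).trace :=
  smul_trace_le_trace_mul_of_smul_one_le hQ.inv_trace_inv_smul_one_le hSg
end

section
/- Let x̄ ≤ z_max be real numbers with z_max > 0, X ≥ 0, f ≥ 0, and α ∈ (0,1]. If x̄ ≤ (1 - 0.5α)·z_max - (X·f²)/(2α·z_max), then x̄ ≤ z_max - sqrt(X)·f. (The linearized tightened constraint implies the original square-root tightened constraint.) -/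
theorem le_div_two_add_sq_div_two_mul {a c : ℝ} (hc : 0 < c) : a ≤ c / 2 + a ^ 2 / (2 * c) := by
  have hgap : c / 2 + a ^ 2 / (2 * c) - a = (a - c) ^ 2 / (2 * c) := by
    field_simp
    ring
  rw [← sub_nonneg, hgap]
  positivity

theorem stmt_11_general (xbar zmax X f α : ℝ)
    (hz : 0 < zmax) (hX : 0 ≤ X) (hα1 : 0 < α)
    (h : xbar ≤ (1 - 0.5 * α) * zmax - (X * f ^ 2) / (2 * α * zmax)) :
    xbar ≤ zmax - Real.sqrt X * f := by
  have amgm := le_div_two_add_sq_div_two_mul (a := Real.sqrt X * f) (mul_pos hα1 hz)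
  rw [mul_pow, Real.sq_sqrt hX, ← mul_assoc] at amgm
  linarith

theorem stmt_11 (xbar zmax X f α : ℝ)
    (hz : 0 < zmax) (hX : 0 ≤ X) (hf : 0 ≤ f) (hα1 : 0 < α) (hα2 : α ≤ 1)
    (h : xbar ≤ (1 - 0.5 * α) * zmax - (X * f ^ 2) / (2 * α * zmax)) :
    xbar ≤ zmax - Real.sqrt X * f :=
  stmt_11_general xbar zmax X f α hz hX hα1 h
end

section
/- Let J: ℕ → ℝ satisfy J(t) ≥ α V(t) for all t, J(t) ≤ β V(t) + Nω whenever the state is in a terminal region, and J(t+1) ≤ J(t) - αV(t) + ω, where α, β, ω > 0, α ≤ β, N ∈ ℕ. If at time t the state is in the terminal region, then J(t+1) ≤ (1 - α/β)J(t) + ((α/β)N + 1)ω; consequently the sublevel set {J ≤ (1/η)(N + β/α)ω} is forward invariant for any η ∈ (0,1) provided the trajectory stays in the terminal region. -/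
/-!
Since `J t ≤ β V t + N ω` on the terminal region, the decrease `α V t` in one step is at least
`(α / β) (J t - N ω)`, which turns the one-step bound into the affine contraction
`J (t + 1) ≤ (1 - α / β) J t + ((α / β) N + 1) ω`. An affine contraction `x ↦ (1 - c) x + b` with
`c ≤ 1` maps `{x ≤ L}` into itself as soon as `b ≤ c L`, and for `L = (1 / η) (N + β / α) ω`
one has `c L = (1 / η) b ≥ b`.
-/

lemma le_affine_contraction_of_le {j j' v α β n ω : ℝ} (hα : 0 ≤ α) (hβ : 0 < β)
    (hup : j ≤ β * v + n * ω) (hdec : j' ≤ j - α * v + ω) :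
    j' ≤ (1 - α / β) * j + (α / β * n + 1) * ω := by
  have hdecrease : α / β * (j - n * ω) ≤ α * v := by
    rw [div_mul_eq_mul_div, div_le_iff₀ hβ]
    nlinarith
  linarith

lemma le_of_le_affine_contraction {x x' c b L : ℝ} (hc : c ≤ 1) (hb : b ≤ c * L)
    (hx : x ≤ L) (hx' : x' ≤ (1 - c) * x + b) : x' ≤ L := by
  nlinarith [mul_le_mul_of_nonneg_left hx (sub_nonneg.2 hc)]

theorem stmt_14_general (J V : ℕ → ℝ) (Term : ℕ → Prop) (α β ω : ℝ) (N : ℕ)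
    (hα : 0 < α) (hβ : 0 < β) (hω : 0 < ω) (hαβ : α ≤ β)
    (hup : ∀ t, Term t → J t ≤ β * V t + N * ω)
    (hdec : ∀ t, J (t + 1) ≤ J t - α * V t + ω) :
    (∀ t, Term t → J (t + 1) ≤ (1 - α / β) * J t + ((α / β) * N + 1) * ω) ∧
    (∀ η : ℝ, 0 < η → η < 1 → (∀ t, Term t) →
      ∀ t, J t ≤ (1 / η) * (N + β / α) * ω →
        J (t + 1) ≤ (1 / η) * (N + β / α) * ω) := by
  have contraction : ∀ t, Term t →
      J (t + 1) ≤ (1 - α / β) * J t + ((α / β) * N + 1) * ω := fun t ht =>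
    le_affine_contraction_of_le hα.le hβ (hup t ht) (hdec t)
  refine ⟨contraction, fun η hη hη1 hTerm t hJt => ?_⟩
  have hscaled : α / β * ((1 / η) * (N + β / α) * ω) = ((α / β) * N + 1) * ω / η := by
    field_simp
  refine le_of_le_affine_contraction ((div_le_one hβ).2 hαβ) ?_ hJt (contraction t (hTerm t))
  rw [hscaled]
  exact le_div_self (by positivity) hη hη1.le

theorem stmt_14 (J V : ℕ → ℝ) (Term : ℕ → Prop) (α β ω : ℝ) (N : ℕ)
    (hα : 0 < α) (hβ : 0 < β) (hω : 0 < ω) (hαβ : α ≤ β)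
    (hV : ∀ t, 0 ≤ V t)
    (hlow : ∀ t, α * V t ≤ J t)
    (hup : ∀ t, Term t → J t ≤ β * V t + N * ω)
    (hdec : ∀ t, J (t + 1) ≤ J t - α * V t + ω) :
    (∀ t, Term t → J (t + 1) ≤ (1 - α / β) * J t + ((α / β) * N + 1) * ω) ∧
    (∀ η : ℝ, 0 < η → η < 1 → (∀ t, Term t) →
      ∀ t, J t ≤ (1 / η) * (N + β / α) * ω →
        J (t + 1) ≤ (1 / η) * (N + β / α) * ω) :=
  stmt_14_general J V Term α β ω N hα hβ hω hαβ hup hdec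
end
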